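/- Generalized rotational inertia of an ellipsoid: for a positive definite matrix Q ∈ 𝕊₊₊^{n}, center q ∈ ℝⁿ, reference point x_ref ∈ ℝⁿ, and positive definite weight D ∈ 𝕊₊₊^{n}, the ratio (∫_{E(q,Q)} (x−x_ref)ᵀD(x−x_ref) dx) / (∫_{E(q,Q)} 1 dx) equals (q−x_ref)ᵀD(q−x_ref) + Tr(DQ)/(n+2). -/

import Mathlib

/-!
The ellipsoid is the image of the Euclidean unit ball `B` under the affine map
`v ↦ q + Q^{1/2} v`; its Jacobian `|det Q^{1/2}|` cancels in the ratio. Pulled back to `B`, the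
integrand is the constant `(q - x_ref)ᵀ D (q - x_ref)`, plus a term that is odd in `v` and
integrates to zero, plus the quadratic form of `Q^{1/2} D Q^{1/2}`. Coordinate reflections and
permutations preserve `B`, so `∫_B v vᵀ` is a multiple of the identity, and the radial formula
`∫_B |v|² = n/(n+2) |B|` fixes the multiple. The quadratic part therefore contributes
`Tr(Q^{1/2} D Q^{1/2}) |B| / (n+2) = Tr(DQ) |B| / (n+2)`.
-/

open Matrix MeasureTheory

noncomputable def Matrix.PosSemidef.sqrt {m : ℕ} {A : Matrix (Fin m) (Fin m) ℝ}
    (hA : A.PosSemidef) : Matrix (Fin m) (Fin m) ℝ :=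
  hA.1.eigenvectorUnitary.1 * diagonal ((↑) ∘ (√·) ∘ hA.1.eigenvalues) *
  (star hA.1.eigenvectorUnitary : Matrix (Fin m) (Fin m) ℝ)

noncomputable def ellipsoid {m : ℕ} {Q : Matrix (Fin m) (Fin m) ℝ}
    (q : Fin m → ℝ) (hQ : Q.PosSemidef) : Set (Fin m → ℝ) :=
  {x | ∃ v : Fin m → ℝ, v ⬝ᵥ v ≤ 1 ∧ x = q + hQ.sqrt.mulVec v}

noncomputable def frob {p q : ℕ} (M : Matrix (Fin p) (Fin q) ℝ) : ℝ :=
  Real.sqrt (Matrix.trace (Mᵀ * M))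

open Metric Set

theorem setIntegral_closedBall_norm_pow {E : Type*} [NormedAddCommGroup E] [NormedSpace ℝ E]
    [Nontrivial E] [FiniteDimensional ℝ E] [MeasurableSpace E] [BorelSpace E]
    (μ : Measure E) [μ.IsAddHaarMeasure] (k : ℕ) :
    ∫ x in closedBall (0 : E) 1, ‖x‖ ^ k ∂μ =
      Module.finrank ℝ E / (Module.finrank ℝ E + k) * μ.real (closedBall 0 1) := by
  have hradial := integral_fun_norm_addHaar μ ((Iic (1 : ℝ)).indicator (· ^ k))
  set d := Module.finrank ℝ E
  have hd : 0 < d := Module.finrank_pos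
  have hball : ∫ x, (Iic (1 : ℝ)).indicator (· ^ k) ‖x‖ ∂μ =
      ∫ x in closedBall (0 : E) 1, ‖x‖ ^ k ∂μ := by
    classical
    rw [← integral_indicator measurableSet_closedBall]
    congr 1 with x
    simp only [indicator_apply, mem_Iic, mem_closedBall, dist_zero_right]
  have hprofile :
      ∫ y in Ioi (0 : ℝ), y ^ (d - 1) • (Iic (1 : ℝ)).indicator (· ^ k) y = 1 / (d + k) := by
    have hpt (y : ℝ) : y ^ (d - 1) • (Iic (1 : ℝ)).indicator (· ^ k) y =
        (Iic 1).indicator (· ^ (d - 1 + k)) y := by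
      by_cases hy : y ∈ Iic 1 <;> simp [hy, pow_add]
    simp_rw [hpt, setIntegral_indicator measurableSet_Iic, Ioi_inter_Iic]
    rw [← intervalIntegral.integral_of_le zero_le_one, integral_pow, one_pow,
      zero_pow (Nat.succ_ne_zero _), sub_zero, Nat.cast_add, Nat.cast_sub hd]
    ring
  rw [← hball, hradial, hprofile, Measure.addHaar_real_closedBall_eq_addHaar_real_ball,
    nsmul_eq_mul, smul_eq_mul]
  field_simp

theorem EuclideanSpace.ofLp_dotProduct_ofLp_self {ι : Type*} [Fintype ι]
    (x : EuclideanSpace ℝ ι) : x.ofLp ⬝ᵥ x.ofLp = ‖x‖ ^ 2 := by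
  rw [← real_inner_self_eq_norm_sq, EuclideanSpace.inner_eq_star_dotProduct, star_trivial]

theorem setIntegral_image_affine {n : ℕ} (q : Fin n → ℝ) {A : Matrix (Fin n) (Fin n) ℝ}
    (hA : A.det ≠ 0) {s : Set (Fin n → ℝ)} (hs : MeasurableSet s) (g : (Fin n → ℝ) → ℝ) :
    ∫ x in (fun v => q + A *ᵥ v) '' s, g x = |A.det| * ∫ v in s, g (q + A *ᵥ v) := by
  have hderiv (v : Fin n → ℝ) : HasFDerivWithinAt (fun v => q + A *ᵥ v)
      (LinearMap.toContinuousLinearMap (toLin' A)) s v :=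
    ((LinearMap.toContinuousLinearMap (toLin' A)).hasFDerivAt.const_add q).hasFDerivWithinAt
  have hinj : Function.Injective (A *ᵥ ·) :=
    mulVec_injective_iff_isUnit.mpr ((isUnit_iff_isUnit_det A).mpr hA.isUnit)
  rw [integral_image_eq_integral_abs_det_fderiv_smul volume hs (fun v _ => hderiv v)
    (fun v _ w _ h => hinj (add_left_cancel h)), ← integral_const_mul]
  simp [LinearMap.det_toLin']

theorem Matrix.PosSemidef.sqrt_mul_self {m : ℕ} {A : Matrix (Fin m) (Fin m) ℝ}
    (hA : A.PosSemidef) : hA.sqrt * hA.sqrt = A := by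
  set U : Matrix (Fin m) (Fin m) ℝ := hA.1.eigenvectorUnitary.1
  set d : Matrix (Fin m) (Fin m) ℝ := diagonal ((↑) ∘ (√·) ∘ hA.1.eigenvalues)
  have hU : star U * U = 1 := Unitary.coe_star_mul_self _
  have hd : d * d = diagonal (RCLike.ofReal ∘ hA.1.eigenvalues) := by
    rw [diagonal_mul_diagonal]
    congr 1 with i
    simp [Real.mul_self_sqrt (hA.eigenvalues_nonneg i)]
  conv_rhs => rw [hA.1.spectral_theorem, Unitary.conjStarAlgAut_apply]
  change U * d * star U * (U * d * star U) = _
  rw [show U * d * star U * (U * d * star U) = U * (d * (star U * U) * d) * star U by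
    simp only [Matrix.mul_assoc], hU, Matrix.mul_one, hd]

theorem Matrix.PosSemidef.transpose_sqrt {m : ℕ} {A : Matrix (Fin m) (Fin m) ℝ}
    (hA : A.PosSemidef) : hA.sqrtᵀ = hA.sqrt := by
  simp [Matrix.PosSemidef.sqrt, transpose_mul, Matrix.mul_assoc, star_eq_conjTranspose,
    conjTranspose_eq_transpose_of_trivial]

theorem Matrix.PosDef.det_sqrt_ne_zero {m : ℕ} {A : Matrix (Fin m) (Fin m) ℝ}
    (hA : A.PosDef) : hA.posSemidef.sqrt.det ≠ 0 := by
  have h := hA.det_pos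
  rw [← hA.posSemidef.sqrt_mul_self, det_mul] at h
  exact fun h0 => by simp [h0] at h

/-- The closed unit ball of the `ℓ²` norm; `Metric.closedBall 0 1` in `Fin n → ℝ` would be the
unit cube, since the function space carries the sup norm. -/
def euclideanUnitBall (n : ℕ) : Set (Fin n → ℝ) := {v | v ⬝ᵥ v ≤ 1}

namespace euclideanUnitBall

variable {n : ℕ}

theorem ofLp_preimage :
    WithLp.ofLp ⁻¹' euclideanUnitBall n = closedBall (0 : EuclideanSpace ℝ (Fin n)) 1 := by
  ext x
  rw [mem_closedBall_zero_iff, ← sq_le_one_iff₀ (norm_nonneg x),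
    ← EuclideanSpace.ofLp_dotProduct_ofLp_self]
  rfl

theorem measurableSet : MeasurableSet (euclideanUnitBall n) :=
  measurableSet_le (by fun_prop) measurable_const

theorem isCompact : IsCompact (euclideanUnitBall n) := by
  have := (isCompact_closedBall (0 : EuclideanSpace ℝ (Fin n)) 1).image (PiLp.continuous_ofLp 2 _)
  rwa [← ofLp_preimage, image_preimage_eq _ (WithLp.ofLp_surjective 2)] at this

theorem integrableOn {g : (Fin n → ℝ) → ℝ} (hg : Continuous g) :
    IntegrableOn g (euclideanUnitBall n) :=
  hg.continuousOn.integrableOn_compact isCompact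

theorem setIntegral_ofLp (g : (Fin n → ℝ) → ℝ) :
    ∫ x in closedBall (0 : EuclideanSpace ℝ (Fin n)) 1, g (WithLp.ofLp x) =
      ∫ v in euclideanUnitBall n, g v := by
  rw [← ofLp_preimage, (PiLp.volume_preserving_ofLp (Fin n)).setIntegral_preimage_emb
    (MeasurableEquiv.toLp 2 (Fin n → ℝ)).symm.measurableEmbedding]

theorem measureReal_pos : 0 < volume.real (euclideanUnitBall n) := by
  rw [← (PiLp.volume_preserving_ofLp (Fin n)).measureReal_preimage
    measurableSet.nullMeasurableSet, ofLp_preimage]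
  exact ENNReal.toReal_pos (measure_closedBall_pos volume _ one_pos).ne'
    measure_closedBall_lt_top.ne

theorem setIntegral_dotProduct_self :
    ∫ v in euclideanUnitBall n, v ⬝ᵥ v = n / (n + 2) * volume.real (euclideanUnitBall n) := by
  rcases n.eq_zero_or_pos with rfl | hn
  · simp [dotProduct]
  have : Nonempty (Fin n) := Fin.pos_iff_nonempty.mp hn
  rw [← setIntegral_ofLp, ← (PiLp.volume_preserving_ofLp (Fin n)).measureReal_preimage
    measurableSet.nullMeasurableSet, ofLp_preimage]
  simp_rw [EuclideanSpace.ofLp_dotProduct_ofLp_self, setIntegral_closedBall_norm_pow,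
    finrank_euclideanSpace_fin]
  norm_cast

theorem setIntegral_comp {T : (Fin n → ℝ) ≃ᵐ (Fin n → ℝ)} (hT : MeasurePreserving T)
    (hT_dot : ∀ v, T v ⬝ᵥ T v = v ⬝ᵥ v) (g : (Fin n → ℝ) → ℝ) :
    ∫ v in euclideanUnitBall n, g (T v) = ∫ v in euclideanUnitBall n, g v := by
  have hpre : T ⁻¹' euclideanUnitBall n = euclideanUnitBall n := by
    ext v
    simp [euclideanUnitBall, hT_dot]
  conv_lhs => rw [← hpre]
  exact hT.setIntegral_preimage_emb T.measurableEmbedding g _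

theorem setIntegral_eq_zero_of_comp_eq_neg {T : (Fin n → ℝ) ≃ᵐ (Fin n → ℝ)}
    (hT : MeasurePreserving T) (hT_dot : ∀ v, T v ⬝ᵥ T v = v ⬝ᵥ v) {g : (Fin n → ℝ) → ℝ}
    (hg : ∀ v, g (T v) = -g v) : ∫ v in euclideanUnitBall n, g v = 0 := by
  have := setIntegral_comp hT hT_dot g
  simp_rw [hg, integral_neg] at this
  linarith

theorem setIntegral_eq_zero_of_odd {g : (Fin n → ℝ) → ℝ} (hg : ∀ v, g (-v) = -g v) :
    ∫ v in euclideanUnitBall n, g v = 0 :=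
  setIntegral_eq_zero_of_comp_eq_neg (T := MeasurableEquiv.neg _)
    (Measure.measurePreserving_neg volume) (fun v => by simp) hg

theorem setIntegral_mul_of_ne {i j : Fin n} (hij : i ≠ j) :
    ∫ v in euclideanUnitBall n, v i * v j = 0 := by
  classical
  let e (k : Fin n) : ℝ ≃ᵐ ℝ := if k = i then MeasurableEquiv.neg ℝ else MeasurableEquiv.refl ℝ
  have he (k : Fin n) : MeasurePreserving (e k) := by
    by_cases hk : k = i
    · simpa [e, hk] using Measure.measurePreserving_neg volume
    · simp only [e, hk, if_false]
      exact MeasurePreserving.id volume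
  have hT (v : Fin n → ℝ) (k : Fin n) :
      MeasurableEquiv.piCongrRight e v k = if k = i then -v k else v k := by
    by_cases hk : k = i <;> simp [e, hk, MeasurableEquiv.piCongrRight]
  refine setIntegral_eq_zero_of_comp_eq_neg (T := MeasurableEquiv.piCongrRight e)
    (volume_preserving_pi he) (fun v => Finset.sum_congr rfl fun k _ => ?_) (fun v => ?_)
  · rw [hT]
    split_ifs <;> ring
  · simp [hT, hij.symm]

theorem setIntegral_mul_self_eq (i j : Fin n) :
    ∫ v in euclideanUnitBall n, v i * v i = ∫ v in euclideanUnitBall n, v j * v j := by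
  set σ := Equiv.swap i j
  have hσ (v : Fin n → ℝ) (k : Fin n) :
      MeasurableEquiv.piCongrLeft (fun _ => ℝ) σ v (σ k) = v k :=
    MeasurableEquiv.piCongrLeft_apply_apply (β := fun _ => ℝ) σ v k
  have := setIntegral_comp (volume_measurePreserving_piCongrLeft (fun _ => ℝ) σ)
    (fun v => ?_) (fun v => v j * v j)
  · have hj : σ i = j := Equiv.swap_apply_left i j
    simpa [← hj, hσ] using this
  · rw [dotProduct, dotProduct, ← Equiv.sum_comp σ]
    simp only [hσ]

theorem setIntegral_mul (i j : Fin n) :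
    ∫ v in euclideanUnitBall n, v i * v j =
      (1 : Matrix (Fin n) (Fin n) ℝ) i j / (n + 2) * volume.real (euclideanUnitBall n) := by
  rcases eq_or_ne i j with rfl | hij
  · have hn : (n : ℝ) ≠ 0 := by exact_mod_cast i.pos.ne'
    have hsum : ∑ k : Fin n, ∫ v in euclideanUnitBall n, v k * v k =
        ∫ v in euclideanUnitBall n, v ⬝ᵥ v :=
      (integral_finsetSum _ fun k _ => integrableOn (by fun_prop)).symm
    simp_rw [setIntegral_mul_self_eq _ i, Finset.sum_const, Finset.card_univ, Fintype.card_fin,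
      nsmul_eq_mul, setIntegral_dotProduct_self] at hsum
    rw [one_apply_eq]
    field_simp at hsum ⊢
    linarith
  · rw [setIntegral_mul_of_ne hij, one_apply_ne hij, zero_div, zero_mul]

theorem setIntegral_dotProduct_mulVec (M : Matrix (Fin n) (Fin n) ℝ) :
    ∫ v in euclideanUnitBall n, v ⬝ᵥ M *ᵥ v =
      M.trace / (n + 2) * volume.real (euclideanUnitBall n) := by
  have hexpand (v : Fin n → ℝ) : v ⬝ᵥ M *ᵥ v = ∑ i, ∑ j, M i j * (v i * v j) := by
    simp only [dotProduct, mulVec, Finset.mul_sum]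
    exact Finset.sum_congr rfl fun i _ => Finset.sum_congr rfl fun j _ => by ring
  have hint (i j : Fin n) :
      IntegrableOn (fun v : Fin n → ℝ => M i j * (v i * v j)) (euclideanUnitBall n) :=
    integrableOn (by fun_prop)
  simp_rw [hexpand]
  rw [integral_finsetSum _ fun i _ => integrable_finsetSum _ fun j _ => hint i j]
  refine (Finset.sum_congr rfl fun i _ => integral_finsetSum _ fun j _ => hint i j).trans ?_
  simp_rw [integral_const_mul, setIntegral_mul]
  simp [trace, Finset.sum_mul, one_apply, div_eq_mul_inv, mul_assoc]

theorem setIntegral_affine_dotProduct_mulVec (u : Fin n → ℝ)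
    (A D : Matrix (Fin n) (Fin n) ℝ) :
    ∫ v in euclideanUnitBall n, (u + A *ᵥ v) ⬝ᵥ D *ᵥ (u + A *ᵥ v) =
      (u ⬝ᵥ D *ᵥ u + (Aᵀ * D * A).trace / (n + 2)) * volume.real (euclideanUnitBall n) := by
  set ℓ : (Fin n → ℝ) → ℝ := fun v => u ⬝ᵥ D *ᵥ A *ᵥ v + A *ᵥ v ⬝ᵥ D *ᵥ u
  have hexpand (v : Fin n → ℝ) : (u + A *ᵥ v) ⬝ᵥ D *ᵥ (u + A *ᵥ v) =
      u ⬝ᵥ D *ᵥ u + ℓ v + v ⬝ᵥ (Aᵀ * D * A) *ᵥ v := by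
    simp only [ℓ, mulVec_add, dotProduct_add, add_dotProduct, ← mulVec_mulVec,
      dotProduct_mulVec _ Aᵀ, vecMul_transpose]
    ring
  have hℓ : ∫ v in euclideanUnitBall n, ℓ v = 0 :=
    setIntegral_eq_zero_of_odd fun v => by
      simp only [ℓ, mulVec_neg, dotProduct_neg, neg_dotProduct]
      ring
  simp_rw [hexpand]
  rw [integral_add (integrableOn (by fun_prop)) (integrableOn (by fun_prop)),
    integral_add (integrableOn (by fun_prop)) (integrableOn (by fun_prop)), hℓ,
    setIntegral_dotProduct_mulVec, setIntegral_const, smul_eq_mul]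
  ring

end euclideanUnitBall

theorem ellipsoid_eq_image {m : ℕ} {Q : Matrix (Fin m) (Fin m) ℝ} (q : Fin m → ℝ)
    (hQ : Q.PosSemidef) :
    ellipsoid q hQ = (fun v => q + hQ.sqrt *ᵥ v) '' euclideanUnitBall m := by
  ext x
  simp [ellipsoid, euclideanUnitBall, eq_comm]

theorem stmt9_general {n : ℕ} (q xref : Fin n → ℝ) {Q D : Matrix (Fin n) (Fin n) ℝ}
    (hQ : Q.PosDef) :
    (∫ x in ellipsoid q hQ.posSemidef, (x - xref) ⬝ᵥ D.mulVec (x - xref)) /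
      (∫ _x in ellipsoid q hQ.posSemidef, (1 : ℝ)) =
    (q - xref) ⬝ᵥ D.mulVec (q - xref) + Matrix.trace (D * Q) / ((n : ℝ) + 2) := by
  set S := hQ.posSemidef.sqrt
  have hS : S.det ≠ 0 := hQ.det_sqrt_ne_zero
  have htrace : (Sᵀ * D * S).trace = (D * Q).trace := by
    rw [trace_mul_cycle, hQ.posSemidef.transpose_sqrt, hQ.posSemidef.sqrt_mul_self,
      trace_mul_comm]
  have hshift (v : Fin n → ℝ) : q + S *ᵥ v - xref = (q - xref) + S *ᵥ v := by abel
  rw [ellipsoid_eq_image, setIntegral_image_affine q hS euclideanUnitBall.measurableSet,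
    setIntegral_image_affine q hS euclideanUnitBall.measurableSet]
  simp_rw [hshift]
  rw [euclideanUnitBall.setIntegral_affine_dotProduct_mulVec, setIntegral_const, smul_eq_mul,
    mul_one, htrace]
  have hB := euclideanUnitBall.measureReal_pos (n := n)
  field_simp

theorem stmt9 {n : ℕ} (q xref : Fin n → ℝ) {Q D : Matrix (Fin n) (Fin n) ℝ}
    (hQ : Q.PosDef) (hD : D.PosDef) :
    (∫ x in ellipsoid q hQ.posSemidef, (x - xref) ⬝ᵥ D.mulVec (x - xref)) /
      (∫ _x in ellipsoid q hQ.posSemidef, (1 : ℝ)) =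
    (q - xref) ⬝ᵥ D.mulVec (q - xref) + Matrix.trace (D * Q) / ((n : ℝ) + 2) :=
  stmt9_general q xref hQ
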